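/- (Rota) Let M be a loopless matroid on a finite ground set with rank function r, let L(M) be its lattice of flats, and let μ be the Möbius function of L(M). Then for all flats F ⊆ F′ of M, (−1)^{r(F′) − r(F)} · μ(F, F′) > 0. In particular, the Möbius function of the lattice of flats never vanishes and alternates in sign with rank. -/
import Mathlib


/-- A matroid on a finite ground set `E`, given by the independence axioms (I1)-(I3). -/
structure FinMatroid (E : Type*) [Fintype E] [DecidableEq E] where
  Indep : Finset E → Prop
  indep_empty : Indep ∅
  indep_subset : ∀ ⦃I J : Finset E⦄, Indep J → I ⊆ J → Indep I
  indep_exchange : ∀ ⦃I J : Finset E⦄, Indep I → Indep J → I.card < J.card →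
    ∃ e ∈ J, e ∉ I ∧ Indep (insert e I)

namespace FinMatroid

variable {E : Type*} [Fintype E] [DecidableEq E]

open Classical in
/-- The rank of a subset `A`: the maximal cardinality of an independent subset of `A`. -/
noncomputable def rank (M : FinMatroid E) (A : Finset E) : ℕ :=
  (A.powerset.filter fun I => M.Indep I).sup Finset.card

/-- The rank of the matroid. -/
noncomputable def rk (M : FinMatroid E) : ℕ := M.rank Finset.univ

/-- The closure of a subset `A`: all elements `x` with `r(A ∪ {x}) = r(A)`. -/
noncomputable def closure (M : FinMatroid E) (A : Finset E) : Finset E :=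
  Finset.univ.filter fun x => M.rank (insert x A) = M.rank A

/-- A flat is a closed subset. -/
def IsFlat (M : FinMatroid E) (F : Finset E) : Prop := M.closure F = F

/-- A matroid is loopless if the closure of the empty set is empty. -/
def Loopless (M : FinMatroid E) : Prop := M.closure ∅ = ∅

/-- A basis is a maximal independent set. -/
def IsBase (M : FinMatroid E) (B : Finset E) : Prop :=
  M.Indep B ∧ ∀ ⦃J⦄, M.Indep J → B ⊆ J → J = B

open Classical in
/-- The finset of all flats of `M`. -/
noncomputable def flats (M : FinMatroid E) : Finset (Finset E) :=
  Finset.univ.filter fun F => M.IsFlat F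

open Classical in
/-- `mu` is the Möbius function of the lattice of flats of `M`: it satisfies `mu F F = 1`,
`mu F F' = 0` when `¬ F ⊆ F'`, and for `F ⊂ F'` the sum of `mu F G` over the flats
`F ⊆ G ⊆ F'` vanishes. These properties determine `mu` uniquely on pairs of flats. -/
def IsMobius (M : FinMatroid E) (mu : Finset E → Finset E → ℤ) : Prop :=
  (∀ F ∈ M.flats, mu F F = 1) ∧
  (∀ F ∈ M.flats, ∀ F' ∈ M.flats, ¬F ⊆ F' → mu F F' = 0) ∧
  (∀ F ∈ M.flats, ∀ F' ∈ M.flats, F ⊂ F' →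
    ∑ G ∈ M.flats.filter (fun G => F ⊆ G ∧ G ⊆ F'), mu F G = 0)

open Classical in
/-- The characteristic polynomial of a matroid `M` (relative to the Möbius function `mu` of
its lattice of flats): `χ_M(t) = Σ_{F ∈ L(M)} μ(∅,F) t^{r(E) - r(F)}` if `M` is loopless,
and `0` if `M` has a loop. -/
noncomputable def charPoly (M : FinMatroid E) (mu : Finset E → Finset E → ℤ) : Polynomial ℤ :=
  if M.Loopless then
    ∑ F ∈ M.flats, Polynomial.C (mu ∅ F) * Polynomial.X ^ (M.rk - M.rank F)
  else 0

end FinMatroid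
namespace FinMatroid

variable {E : Type*} [Fintype E] [DecidableEq E]

lemma card_le_rank (M : FinMatroid E) {I A : Finset E} (hI : M.Indep I) (hIA : I ⊆ A) :
    I.card ≤ M.rank A := by
  classical
  unfold rank
  convert Finset.le_sup (f := Finset.card) (b := I) ?_ using 2
  simp [Finset.mem_filter, Finset.mem_powerset, hIA, hI]

lemma exists_basis (M : FinMatroid E) (A : Finset E) :
    ∃ I, M.Indep I ∧ I ⊆ A ∧ I.card = M.rank A := by
  classical
  unfold rank
  have hne : (A.powerset.filter fun I => M.Indep I).Nonempty :=
    ⟨∅, by simp [Finset.mem_filter, M.indep_empty]⟩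
  obtain ⟨I, hImem, hcard⟩ := Finset.exists_mem_eq_sup _ hne Finset.card
  simp only [Finset.mem_filter, Finset.mem_powerset] at hImem
  exact ⟨I, hImem.2, hImem.1, by convert hcard.symm using 2⟩

lemma rank_mono (M : FinMatroid E) {A B : Finset E} (h : A ⊆ B) : M.rank A ≤ M.rank B := by
  obtain ⟨I, hI, hIA, hc⟩ := M.exists_basis A
  exact hc ▸ M.card_le_rank hI (hIA.trans h)
lemma rank_insert_le (M : FinMatroid E) (A : Finset E) (x : E) :
    M.rank (insert x A) ≤ M.rank A + 1 := by
  obtain ⟨I, hI, hIA, hc⟩ := M.exists_basis (insert x A)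
  have h1 : I.erase x ⊆ A := by
    intro y hy
    have := hIA (Finset.mem_of_mem_erase hy)
    rcases Finset.mem_insert.1 this with h | h
    · exact absurd h (Finset.ne_of_mem_erase hy)
    · exact h
  have h2 : (I.erase x).card ≤ M.rank A :=
    M.card_le_rank (M.indep_subset hI (Finset.erase_subset _ _)) h1
  have h3 : I.card ≤ (I.erase x).card + 1 := by
    rcases Finset.decidableMem x I with h | h
    · simp [Finset.erase_eq_of_notMem h]
    · rw [Finset.card_erase_of_mem h]; omega
  omega

lemma exists_basis_superset (M : FinMatroid E) {I A : Finset E} (hI : M.Indep I) (hIA : I ⊆ A) :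
    ∃ J, M.Indep J ∧ I ⊆ J ∧ J ⊆ A ∧ J.card = M.rank A := by
  by_cases h : I.card = M.rank A
  · exact ⟨I, hI, Finset.Subset.refl I, hIA, h⟩
  · have hlt : I.card < M.rank A := lt_of_le_of_ne (M.card_le_rank hI hIA) h
    obtain ⟨K, hK, hKA, hKc⟩ := M.exists_basis A
    obtain ⟨e, heK, heI, hInd⟩ := M.indep_exchange hI hK (hKc ▸ hlt)
    have : M.rank A - (insert e I).card < M.rank A - I.card := by
      rw [Finset.card_insert_of_notMem heI]; omega
    obtain ⟨J, hJ1, hJ2, hJ3, hJ4⟩ :=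
      M.exists_basis_superset hInd (Finset.insert_subset (hKA heK) hIA)
    exact ⟨J, hJ1, (Finset.subset_insert e I).trans hJ2, hJ3, hJ4⟩
termination_by M.rank A - I.card

/-- If `x` does not increase the rank of `A`, it does not increase the rank of any superset. -/
lemma rank_insert_superset (M : FinMatroid E) {A B : Finset E} {x : E}
    (hx : M.rank (insert x A) = M.rank A) (hAB : A ⊆ B) :
    M.rank (insert x B) = M.rank B := by
  refine le_antisymm ?_ (M.rank_mono (Finset.subset_insert x B))
  by_contra hcon
  push_neg at hcon
  obtain ⟨I, hI, hIA, hIc⟩ := M.exists_basis A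
  obtain ⟨J, hJ, hIJ, hJB, hJc⟩ := M.exists_basis_superset hI (hIA.trans hAB)
  obtain ⟨K, hK, hKB, hKc⟩ := M.exists_basis (insert x B)
  obtain ⟨e, heK, heJ, hInd⟩ := M.indep_exchange hJ hK (by omega)
  have hex : e = x := by
    by_contra hne
    have heB : e ∈ B := by
      rcases Finset.mem_insert.1 (hKB heK) with h | h
      · exact absurd h hne
      · exact h
    have := M.card_le_rank hInd (Finset.insert_subset heB hJB)
    rw [Finset.card_insert_of_notMem heJ] at this
    omega
  subst hex
  have hxI : e ∉ I := fun h => heJ (hIJ h)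
  have hInd' : M.Indep (insert e I) :=
    M.indep_subset hInd (Finset.insert_subset_insert _ hIJ)
  have := M.card_le_rank hInd' (Finset.insert_subset_insert _ hIA)
  rw [Finset.card_insert_of_notMem hxI, hx] at this
  omega

lemma rank_union_eq (M : FinMatroid E) {A : Finset E} (B : Finset E)
    (h : ∀ b ∈ B, M.rank (insert b A) = M.rank A) : M.rank (A ∪ B) = M.rank A := by
  classical
  induction B using Finset.induction with
  | empty => simp
  | @insert b B hb ih =>
    have h1 : M.rank (A ∪ B) = M.rank A := ih fun c hc => h c (Finset.mem_insert_of_mem hc)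
    have h2 : M.rank (insert b (A ∪ B)) = M.rank (A ∪ B) :=
      M.rank_insert_superset (h b (Finset.mem_insert_self b B))
        Finset.subset_union_left
    calc M.rank (A ∪ insert b B) = M.rank (insert b (A ∪ B)) := by
          rw [Finset.union_insert]
      _ = M.rank A := by rw [h2, h1]
lemma mem_closure_iff (M : FinMatroid E) {A : Finset E} {x : E} :
    x ∈ M.closure A ↔ M.rank (insert x A) = M.rank A := by
  classical
  unfold closure
  constructor
  · intro h
    have := Finset.mem_filter.1 (by convert h using 2)
    exact this.2
  · intro h
    have : x ∈ Finset.univ.filter fun x => M.rank (insert x A) = M.rank A :=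
      Finset.mem_filter.2 ⟨Finset.mem_univ x, h⟩
    convert this using 2

lemma subset_closure (M : FinMatroid E) (A : Finset E) : A ⊆ M.closure A := by
  intro x hx
  rw [M.mem_closure_iff, Finset.insert_eq_self.2 hx]

lemma rank_closure (M : FinMatroid E) (A : Finset E) : M.rank (M.closure A) = M.rank A := by
  have h1 : A ∪ M.closure A = M.closure A :=
    Finset.union_eq_right.2 (M.subset_closure A)
  rw [← h1]
  exact M.rank_union_eq _ fun b hb => M.mem_closure_iff.1 hb

lemma closure_mono (M : FinMatroid E) {A B : Finset E} (h : A ⊆ B) :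
    M.closure A ⊆ M.closure B := by
  intro x hx
  rw [M.mem_closure_iff] at hx ⊢
  exact M.rank_insert_superset hx h

lemma isFlat_closure (M : FinMatroid E) (A : Finset E) : M.IsFlat (M.closure A) := by
  refine Finset.Subset.antisymm ?_ (M.subset_closure _)
  intro x hx
  rw [M.mem_closure_iff] at hx ⊢
  rw [M.rank_closure] at hx
  refine le_antisymm ?_ (M.rank_mono (Finset.subset_insert x A))
  calc M.rank (insert x A) ≤ M.rank (insert x (M.closure A)) :=
        M.rank_mono (Finset.insert_subset_insert _ (M.subset_closure A))
    _ = M.rank A := hx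

lemma closure_subset_flat (M : FinMatroid E) {A G : Finset E} (hG : M.IsFlat G) (h : A ⊆ G) :
    M.closure A ⊆ G := by
  have := M.closure_mono h
  rwa [hG] at this

lemma rank_insert_of_flat (M : FinMatroid E) {F : Finset E} (hF : M.IsFlat F) {x : E}
    (hx : x ∉ F) : M.rank (insert x F) = M.rank F + 1 := by
  have h1 : M.rank (insert x F) ≠ M.rank F := by
    intro h
    exact hx (hF ▸ M.mem_closure_iff.2 h)
  have h2 := M.rank_insert_le F x
  have h3 := M.rank_mono (Finset.subset_insert x F)
  omega

lemma rank_lt_of_ssubset_flat (M : FinMatroid E) {F F' : Finset E} (hF' : M.IsFlat F')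
    (hF : M.IsFlat F) (h : F ⊂ F') : M.rank F < M.rank F' := by
  obtain ⟨x, hxF', hxF⟩ := Finset.exists_of_ssubset h
  have := M.rank_insert_of_flat hF hxF
  have h2 : M.rank (insert x F) ≤ M.rank F' :=
    M.rank_mono (Finset.insert_subset hxF' h.subset)
  omega

lemma mem_flats_iff (M : FinMatroid E) {F : Finset E} : F ∈ M.flats ↔ M.IsFlat F := by
  classical
  unfold flats
  constructor
  · intro h
    exact (Finset.mem_filter.1 (by convert h using 2)).2
  · intro h
    have : F ∈ Finset.univ.filter fun F => M.IsFlat F :=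
      Finset.mem_filter.2 ⟨Finset.mem_univ F, h⟩
    convert this using 2
lemma closure_exchange (M : FinMatroid E) {X : Finset E} {a b : E}
    (h : a ∈ M.closure (insert b X)) (ha : a ∉ M.closure X) :
    b ∈ M.closure (insert a X) := by
  rw [M.mem_closure_iff] at h ha ⊢
  have h1 : M.rank (insert a X) ≤ M.rank X + 1 := M.rank_insert_le X a
  have h2 : M.rank X ≤ M.rank (insert a X) := M.rank_mono (Finset.subset_insert a X)
  have h3 : M.rank (insert a X) = M.rank X + 1 := by omega
  have h4 : M.rank (insert b X) ≤ M.rank X + 1 := M.rank_insert_le X b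
  have h5 : insert b (insert a X) = insert a (insert b X) := Finset.insert_comm b a X
  have h6 : M.rank (insert a X) ≤ M.rank (insert b (insert a X)) :=
    M.rank_mono (Finset.subset_insert _ _)
  rw [h5, h] at h6 ⊢
  omega

lemma closure_union_closure_insert (M : FinMatroid E) {F x : Finset E} (h : F ⊆ x) (a : E) :
    M.closure (x ∪ M.closure (insert a F)) = M.closure (insert a x) := by
  apply Finset.Subset.antisymm
  · apply M.closure_subset_flat (M.isFlat_closure _)
    apply Finset.union_subset
    · exact (Finset.subset_insert a x).trans (M.subset_closure _)
    · exact M.closure_subset_flat (M.isFlat_closure _)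
        ((Finset.insert_subset_insert a h).trans (M.subset_closure _))
  · apply M.closure_subset_flat (M.isFlat_closure _)
    have haA : a ∈ M.closure (insert a F) := M.subset_closure _ (Finset.mem_insert_self a F)
    exact (Finset.insert_subset (Finset.mem_union_right _ haA)
      Finset.subset_union_left).trans (M.subset_closure _)

lemma mobius_sum_zero (M : FinMatroid E) {mu : Finset E → Finset E → ℤ}
    (hmu : M.IsMobius mu) {F F' : Finset E} (hF : F ∈ M.flats) (hF' : F' ∈ M.flats)
    (h : F ⊂ F') :
    ∑ G ∈ M.flats.filter (fun G => F ⊆ G ∧ G ⊆ F'), mu F G = 0 := by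
  classical
  have := hmu.2.2 F hF F' hF' h
  convert this using 2

lemma weisner (M : FinMatroid E) {mu : Finset E → Finset E → ℤ} (hmu : M.IsMobius mu)
    {F F' A : Finset E} (hF : M.IsFlat F) (hF' : M.IsFlat F') (hA : M.IsFlat A)
    (hFA : F ⊂ A) (hAF' : A ⊆ F') :
    ∀ (n : ℕ) (y : Finset E), y.card ≤ n → M.IsFlat y → A ⊆ y → y ⊆ F' →
      ∑ x ∈ M.flats.filter (fun x => F ⊆ x ∧ x ⊆ F' ∧ M.closure (x ∪ A) = y), mu F x = 0 := by
  classical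
  intro n
  induction n with
  | zero =>
    intro y hc hy hAy hyF'
    have hy0 : y = ∅ := Finset.card_eq_zero.1 (Nat.le_zero.1 hc)
    subst hy0
    have : F ⊂ (∅ : Finset E) := Finset.ssubset_of_ssubset_of_subset hFA hAy
    exact absurd this (by simp [Finset.ssubset_iff_subset_ne])
  | succ n ih =>
    intro y hc hy hAy hyF'
    have hFy : F ⊂ y := Finset.ssubset_of_ssubset_of_subset hFA hAy
    set s := M.flats.filter (fun x => F ⊆ x ∧ x ⊆ y) with hs
    set t := M.flats.filter (fun y' => A ⊆ y' ∧ y' ⊆ y) with ht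
    have hmaps : ∀ x ∈ s, M.closure (x ∪ A) ∈ t := by
      intro x hx
      simp only [hs, Finset.mem_filter] at hx
      obtain ⟨hxf, hFx, hxy⟩ := hx
      refine Finset.mem_filter.2 ⟨M.mem_flats_iff.2 (M.isFlat_closure _), ?_, ?_⟩
      · exact Finset.subset_union_right.trans (M.subset_closure _)
      · exact M.closure_subset_flat hy (Finset.union_subset hxy hAy)
    have hfib := Finset.sum_fiberwise_of_maps_to hmaps (mu F)
    have htotal : ∑ x ∈ s, mu F x = 0 :=
      M.mobius_sum_zero hmu (M.mem_flats_iff.2 hF) (M.mem_flats_iff.2 hy) hFy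
    have hfibeq : ∀ y' ∈ t, (s.filter fun x => M.closure (x ∪ A) = y')
        = M.flats.filter (fun x => F ⊆ x ∧ x ⊆ F' ∧ M.closure (x ∪ A) = y') := by
      intro y' hy'
      simp only [ht, Finset.mem_filter] at hy'
      obtain ⟨hy'f, hAy', hy'y⟩ := hy'
      ext x
      simp only [hs, Finset.mem_filter, Finset.mem_filter]
      constructor
      · rintro ⟨⟨hxf, hFx, hxy⟩, hcl⟩
        have hxy' : x ⊆ y' := hcl ▸ (Finset.subset_union_left.trans (M.subset_closure _))
        exact ⟨hxf, hFx, hxy'.trans (hy'y.trans hyF'), hcl⟩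
      · rintro ⟨hxf, hFx, hxF', hcl⟩
        have hxy' : x ⊆ y' := hcl ▸ (Finset.subset_union_left.trans (M.subset_closure _))
        exact ⟨⟨hxf, hFx, hxy'.trans hy'y⟩, hcl⟩
    have h2 : ∑ y' ∈ t,
        ∑ x ∈ M.flats.filter (fun x => F ⊆ x ∧ x ⊆ F' ∧ M.closure (x ∪ A) = y'), mu F x = 0 := by
      calc ∑ y' ∈ t, ∑ x ∈ M.flats.filter
              (fun x => F ⊆ x ∧ x ⊆ F' ∧ M.closure (x ∪ A) = y'), mu F x
          = ∑ y' ∈ t, ∑ x ∈ s.filter (fun x => M.closure (x ∪ A) = y'), mu F x :=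
            Finset.sum_congr rfl (fun y' h => by rw [hfibeq y' h])
        _ = ∑ x ∈ s, mu F x := hfib
        _ = 0 := htotal
    have hyt : y ∈ t := Finset.mem_filter.2 ⟨M.mem_flats_iff.2 hy, hAy, Finset.Subset.refl y⟩
    rw [← Finset.add_sum_erase t _ hyt] at h2
    have herase : ∑ y' ∈ t.erase y,
        ∑ x ∈ M.flats.filter (fun x => F ⊆ x ∧ x ⊆ F' ∧ M.closure (x ∪ A) = y'), mu F x = 0 := by
      apply Finset.sum_eq_zero
      intro y' hy'
      have hy'ne := Finset.ne_of_mem_erase hy'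
      have hy'mem := Finset.mem_of_mem_erase hy'
      simp only [ht, Finset.mem_filter] at hy'mem
      obtain ⟨hy'f, hAy', hy'y⟩ := hy'mem
      have hss : y' ⊂ y := Finset.ssubset_iff_subset_ne.2 ⟨hy'y, hy'ne⟩
      have hcard : y'.card ≤ n := by
        have := Finset.card_lt_card hss
        omega
      exact ih y' hcard (M.mem_flats_iff.1 hy'f) hAy' (hy'y.trans hyF')
    rw [herase, add_zero] at h2
    exact h2
lemma rota_key (M : FinMatroid E) {mu : Finset E → Finset E → ℤ} (hmu : M.IsMobius mu) :
    ∀ (n : ℕ) (F F' : Finset E), (F' \ F).card ≤ n → M.IsFlat F → M.IsFlat F' → F ⊆ F' →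
      0 < (-1 : ℤ) ^ (M.rank F' - M.rank F) * mu F F' := by
  classical
  intro n
  induction n with
  | zero =>
    intro F F' hc hF hF' hFF'
    have hFeq : F = F' := by
      have : F' \ F = ∅ := Finset.card_eq_zero.1 (Nat.le_zero.1 hc)
      exact Finset.Subset.antisymm hFF' (fun x hx => by
        by_contra hxF
        exact absurd (Finset.mem_sdiff.2 ⟨hx, hxF⟩) (by simp [this]))
    subst hFeq
    simp [hmu.1 F (M.mem_flats_iff.2 hF)]
  | succ n ih =>
    intro F F' hc hF hF' hFF'
    by_cases heq : F = F'
    · subst heq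
      simp [hmu.1 F (M.mem_flats_iff.2 hF)]
    have hss : F ⊂ F' := Finset.ssubset_iff_subset_ne.2 ⟨hFF', heq⟩
    obtain ⟨a, haF', haF⟩ := Finset.exists_of_ssubset hss
    set A := M.closure (insert a F) with hA
    have hAflat : M.IsFlat A := M.isFlat_closure _
    have hFsubA : F ⊆ A := (Finset.subset_insert a F).trans (M.subset_closure _)
    have haA : a ∈ A := M.subset_closure _ (Finset.mem_insert_self a F)
    have hFA : F ⊂ A := Finset.ssubset_iff_subset_ne.2 ⟨hFsubA, fun h => haF (h ▸ haA)⟩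
    have hAF' : A ⊆ F' := M.closure_subset_flat hF' (Finset.insert_subset haF' hFF')
    -- the Weisner sum at y = F'
    have hw := M.weisner hmu hF hF' hAflat hFA hAF' F'.card F' le_rfl hF'
      hAF' (Finset.Subset.refl F')
    set S := M.flats.filter (fun x => F ⊆ x ∧ x ⊆ F' ∧ M.closure (x ∪ A) = F') with hS
    have hF'S : F' ∈ S := by
      refine Finset.mem_filter.2 ⟨M.mem_flats_iff.2 hF', hFF', Finset.Subset.refl F', ?_⟩
      rw [Finset.union_eq_left.2 hAF']
      exact hF'
    rw [← Finset.add_sum_erase S _ hF'S] at hw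
    -- rank bookkeeping
    have hrlt : M.rank F < M.rank F' := M.rank_lt_of_ssubset_flat hF' hF hss
    set k := M.rank F' - M.rank F with hk
    have hk1 : 1 ≤ k := by omega
    -- every x in the erased sum has rank F' - 1
    have hterm : ∀ x ∈ S.erase F', 0 < (-1 : ℤ) ^ (k - 1) * mu F x := by
      intro x hx
      have hxne := Finset.ne_of_mem_erase hx
      have hxmem := Finset.mem_of_mem_erase hx
      simp only [hS, Finset.mem_filter] at hxmem
      obtain ⟨hxf, hFx, hxF', hcl⟩ := hxmem
      have hxflat : M.IsFlat x := M.mem_flats_iff.1 hxf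
      have hxss : x ⊂ F' := Finset.ssubset_iff_subset_ne.2 ⟨hxF', hxne⟩
      have hclx : M.closure (insert a x) = F' := by
        rw [← M.closure_union_closure_insert hFx a, ← hA, hcl]
      have hax : a ∉ x := by
        intro hax
        rw [Finset.insert_eq_self.2 hax] at hclx
        exact hxne (hxflat ▸ hclx.symm ▸ rfl)
      have hrk : M.rank F' = M.rank x + 1 := by
        have h1 : M.rank (insert a x) = M.rank x + 1 := M.rank_insert_of_flat hxflat hax
        have h2 : M.rank (M.closure (insert a x)) = M.rank (insert a x) :=
          M.rank_closure _
        rw [hclx] at h2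
        omega
      have hrFx : M.rank F ≤ M.rank x := M.rank_mono hFx
      have hcard : (x \ F).card ≤ n := by
        have hsub : x \ F ⊂ F' \ F := by
          refine Finset.ssubset_iff_subset_ne.2 ⟨Finset.sdiff_subset_sdiff hxF' le_rfl, ?_⟩
          intro hcon
          obtain ⟨e, heF', hex⟩ := Finset.exists_of_ssubset hxss
          have heF : e ∉ F := fun h => hex (hFx h)
          have : e ∈ x \ F := hcon ▸ Finset.mem_sdiff.2 ⟨heF', heF⟩
          exact hex (Finset.mem_sdiff.1 this).1
        have := Finset.card_lt_card hsub
        omega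
      have := ih F x hcard hF hxflat hFx
      have hkx : M.rank x - M.rank F = k - 1 := by omega
      rwa [hkx] at this
    have hSne : (S.erase F').Nonempty := by
      -- take a maximal flat x0 in [F, F'] not containing a
      set T := M.flats.filter (fun x => F ⊆ x ∧ x ⊆ F' ∧ a ∉ x) with hT
      have hFT : F ∈ T := Finset.mem_filter.2 ⟨M.mem_flats_iff.2 hF,
        Finset.Subset.refl F, hFF', haF⟩
      obtain ⟨x₀, hx₀T, hx₀max⟩ := Finset.exists_max_image T Finset.card ⟨F, hFT⟩
      simp only [hT, Finset.mem_filter] at hx₀T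
      obtain ⟨hx₀f, hFx₀, hx₀F', hax₀⟩ := hx₀T
      have hx₀flat : M.IsFlat x₀ := M.mem_flats_iff.1 hx₀f
      have hclx₀ : M.closure (insert a x₀) = F' := by
        apply Finset.Subset.antisymm
          (M.closure_subset_flat hF' (Finset.insert_subset haF' hx₀F'))
        by_contra hcon
        have hssub : M.closure (insert a x₀) ⊂ F' := Finset.ssubset_iff_subset_ne.2
          ⟨M.closure_subset_flat hF' (Finset.insert_subset haF' hx₀F'),
            fun h => hcon (h ▸ Finset.Subset.refl _)⟩
        obtain ⟨b, hbF', hbcl⟩ := Finset.exists_of_ssubset hssub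
        set z := M.closure (insert b x₀) with hz
        have hbz : b ∈ z := M.subset_closure _ (Finset.mem_insert_self b x₀)
        have hbx₀ : b ∉ x₀ := fun h => hbcl
          (M.closure_mono (Finset.insert_subset_insert a (Finset.Subset.refl x₀))
            (M.subset_closure _ (Finset.mem_insert_of_mem h)))
        have haz : a ∉ z := by
          intro haz
          have hacl : a ∉ M.closure x₀ := by
            rw [show M.closure x₀ = x₀ from hx₀flat]
            exact hax₀
          exact hbcl (M.closure_exchange haz hacl)
        have hzT : z ∈ T := by
          refine Finset.mem_filter.2 ⟨M.mem_flats_iff.2 (M.isFlat_closure _), ?_, ?_, haz⟩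
          · exact hFx₀.trans ((Finset.subset_insert b x₀).trans (M.subset_closure _))
          · exact M.closure_subset_flat hF' (Finset.insert_subset hbF' hx₀F')
        have hx₀z : x₀ ⊆ z := (Finset.subset_insert b x₀).trans (M.subset_closure _)
        have : x₀.card < z.card := Finset.card_lt_card
          (Finset.ssubset_iff_subset_ne.2 ⟨hx₀z, fun h => hbx₀ (h ▸ hbz)⟩)
        have := hx₀max z hzT
        omega
      refine ⟨x₀, Finset.mem_erase.2 ⟨fun h => hax₀ (h ▸ haF'), ?_⟩⟩
      refine Finset.mem_filter.2 ⟨hx₀f, hFx₀, hx₀F', ?_⟩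
      rw [M.closure_union_closure_insert hFx₀ a, hclx₀]
    -- conclude
    have hsum : 0 < (-1 : ℤ) ^ (k - 1) * ∑ x ∈ S.erase F', mu F x := by
      rw [Finset.mul_sum]
      exact Finset.sum_pos (fun x hx => hterm x hx) hSne
    have hmuF : mu F F' = -∑ x ∈ S.erase F', mu F x := by linarith [hw]
    have hsign : (-1 : ℤ) ^ k = -(-1 : ℤ) ^ (k - 1) := by
      conv_lhs => rw [show k = (k - 1) + 1 by omega]
      rw [pow_succ]; ring
    rw [hmuF, hsign]
    calc (0:ℤ) < (-1 : ℤ) ^ (k - 1) * ∑ x ∈ S.erase F', mu F x := hsum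
      _ = -(-1 : ℤ) ^ (k - 1) * -∑ x ∈ S.erase F', mu F x := by ring

end FinMatroid


open FinMatroid in
/-- **Rota's theorem.** For a loopless matroid `M`, the Möbius function of the lattice of
flats never vanishes and alternates in sign with rank: for flats `F ⊆ F'` of `M`,
`(-1)^{r(F') - r(F)} · μ(F, F') > 0`. -/
theorem rota_mobius_alternates {E : Type*} [Fintype E] [DecidableEq E]
    (M : FinMatroid E) (hM : M.Loopless)
    (mu : Finset E → Finset E → ℤ) (hmu : M.IsMobius mu)
    (F F' : Finset E) (hF : M.IsFlat F) (hF' : M.IsFlat F') (hFF' : F ⊆ F') :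
    0 < (-1 : ℤ) ^ (M.rank F' - M.rank F) * mu F F' := by
  exact M.rota_key hmu (F' \ F).card F F' le_rfl hF hF' hFF'
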